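/- Let k ≥ 2, and suppose G is a bipartite planar signed graph of girth at least g that admits no s-homomorphism to UC_{2k} and is minimal (every proper subgraph admits one). Then for every positive edge xy of G, letting i be the smallest odd integer such that G minus xy has a sign-preserving homomorphism to ρ(UC_{2k}) mapping x to u_0 and y to u_i, one has 3 ≤ i ≤ 2k-1. -/

import Mathlib

/-- A signed graph, with loopless symmetric positive and negative edge relations. -/
structure SignedGraph (V : Type*) where
  pos : V → V → Prop
  neg : V → V → Prop
  pos_symm : ∀ u v, pos u v → pos v u
  neg_symm : ∀ u v, neg u v → neg v u
  pos_irrefl : ∀ v, ¬ pos v v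
  neg_irrefl : ∀ v, ¬ neg v v

/-- The underlying simple graph of a signed graph. -/
def SignedGraph.underlying {V : Type*} (G : SignedGraph V) : SimpleGraph V where
  Adj u v := G.pos u v ∨ G.neg u v
  symm := by
    constructor
    intro u v h
    rcases h with h | h
    · exact Or.inl (G.pos_symm _ _ h)
    · exact Or.inr (G.neg_symm _ _ h)
  loopless := by
    constructor
    intro v h
    rcases h with h | h
    · exact G.pos_irrefl v h
    · exact G.neg_irrefl v h

/-- `f` is a sign-preserving homomorphism from `G` to `H`. -/
def SignedGraph.IsHom {V W : Type*} (G : SignedGraph V) (H : SignedGraph W)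
    (f : V → W) : Prop :=
  (∀ u v, G.pos u v → H.pos (f u) (f v)) ∧ (∀ u v, G.neg u v → H.neg (f u) (f v))

/-- Switching `G` at the set of vertices `{v | s v = true}`. -/
def SignedGraph.switch {V : Type*} (G : SignedGraph V) (s : V → Bool) : SignedGraph V where
  pos u v := (s u = s v ∧ G.pos u v) ∨ (s u ≠ s v ∧ G.neg u v)
  neg u v := (s u = s v ∧ G.neg u v) ∨ (s u ≠ s v ∧ G.pos u v)
  pos_symm := by
    intro u v h
    rcases h with ⟨h1, h2⟩ | ⟨h1, h2⟩
    · exact Or.inl ⟨h1.symm, G.pos_symm _ _ h2⟩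
    · exact Or.inr ⟨h1.symm, G.neg_symm _ _ h2⟩
  neg_symm := by
    intro u v h
    rcases h with ⟨h1, h2⟩ | ⟨h1, h2⟩
    · exact Or.inl ⟨h1.symm, G.neg_symm _ _ h2⟩
    · exact Or.inr ⟨h1.symm, G.pos_symm _ _ h2⟩
  pos_irrefl := by
    intro v h
    rcases h with ⟨_, h2⟩ | ⟨h1, _⟩
    · exact G.pos_irrefl v h2
    · exact h1 rfl
  neg_irrefl := by
    intro v h
    rcases h with ⟨_, h2⟩ | ⟨h1, _⟩
    · exact G.neg_irrefl v h2
    · exact h1 rfl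

/-- `G` admits an s-homomorphism to `H`. -/
def SignedGraph.SHom {V W : Type*} (G : SignedGraph V) (H : SignedGraph W) : Prop :=
  ∃ (s : V → Bool) (f : V → W), (G.switch s).IsHom H f

/-- The unbalanced even cycle `UC_{2k}`: the cycle on `ZMod (2*k)` whose unique negative
edge is `{2k-1, 0}`. -/
def UC (k : ℕ) : SignedGraph (ZMod (2 * k)) where
  pos a b := a ≠ b ∧ (b - a = 1 ∨ a - b = 1) ∧
    ¬((a = 0 ∧ b = ((2 * k - 1 : ℕ) : ZMod (2 * k))) ∨
      (b = 0 ∧ a = ((2 * k - 1 : ℕ) : ZMod (2 * k))))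
  neg a b := a ≠ b ∧
    ((a = 0 ∧ b = ((2 * k - 1 : ℕ) : ZMod (2 * k))) ∨
     (b = 0 ∧ a = ((2 * k - 1 : ℕ) : ZMod (2 * k))))
  pos_symm := by
    intro u v h
    exact ⟨h.1.symm, by tauto, by tauto⟩
  neg_symm := by
    intro u v h
    exact ⟨h.1.symm, by tauto⟩
  pos_irrefl := by intro v h; exact h.1 rfl
  neg_irrefl := by intro v h; exact h.1 rfl

/-- The switching graph `ρ(UC_{2k})`: vertices `ZMod (4*k)`, positive edges `u_i u_{i+1}`,
negative edges `u_i u_{i+2k-1}`. -/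
def rhoUC (k : ℕ) : SignedGraph (ZMod (4 * k)) where
  pos a b := a ≠ b ∧ (b - a = 1 ∨ a - b = 1)
  neg a b := a ≠ b ∧
    (b - a = ((2 * k - 1 : ℕ) : ZMod (4 * k)) ∨ a - b = ((2 * k - 1 : ℕ) : ZMod (4 * k)))
  pos_symm := by
    intro u v h
    exact ⟨h.1.symm, by tauto⟩
  neg_symm := by
    intro u v h
    exact ⟨h.1.symm, by tauto⟩
  pos_irrefl := by intro v h; exact h.1 rfl
  neg_irrefl := by intro v h; exact h.1 rfl

/-- The signed graph `G` with the (positive) edge `{x, y}` deleted. -/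
def deleteEdge {V : Type*} (G : SignedGraph V) (x y : V) : SignedGraph V where
  pos u v := G.pos u v ∧ ¬((u = x ∧ v = y) ∨ (u = y ∧ v = x))
  neg u v := G.neg u v
  pos_symm := by
    intro u v h
    exact ⟨G.pos_symm _ _ h.1, by tauto⟩
  neg_symm := fun u v h => G.neg_symm _ _ h
  pos_irrefl := by intro v h; exact G.pos_irrefl v h.1
  neg_irrefl := G.neg_irrefl

/-- `H` is a minor of `G`. -/
def IsGraphMinor {W V : Type*} (H : SimpleGraph W) (G : SimpleGraph V) : Prop :=
  ∃ φ : V → Option W,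
    (∀ w, ∃ v, φ v = some w) ∧
    (∀ w, (G.induce {v | φ v = some w}).Connected) ∧
    (∀ w₁ w₂, H.Adj w₁ w₂ → ∃ v₁ v₂, φ v₁ = some w₁ ∧ φ v₂ = some w₂ ∧ G.Adj v₁ v₂)

/-- Planarity, via Wagner's characterization: no `K₅` minor and no `K₃,₃` minor. -/
def IsPlanar {V : Type*} (G : SimpleGraph V) : Prop :=
  ¬ IsGraphMinor (SimpleGraph.completeGraph (Fin 5)) G ∧
  ¬ IsGraphMinor (completeBipartiteGraph (Fin 3) (Fin 3)) G


section Aux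

lemma castEq {n x y : ℕ} (hx : x < n) (hy : y < n) :
    ((x : ZMod n) = (y : ZMod n)) ↔ x = y := by
  constructor
  · intro h
    have h2 := congrArg ZMod.val h
    rwa [ZMod.val_cast_of_lt hx, ZMod.val_cast_of_lt hy] at h2
  · rintro rfl; rfl

lemma castRed {n x : ℕ} (h : n ≤ x) : ((x : ℕ) : ZMod n) = ((x - n : ℕ) : ZMod n) := by
  obtain ⟨y, rfl⟩ := Nat.exists_eq_add_of_le h
  have hy : n + y - n = y := by omega
  rw [hy]
  push_cast
  simp [ZMod.natCast_self]

lemma claim_pos (k : ℕ) (hk : 2 ≤ k) (a b : ZMod (4 * k)) (hab : b - a = 1) :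
    ((a.val < 2 * k ↔ b.val < 2 * k) →
      (UC k).pos ((a.val : ZMod (2 * k))) ((b.val : ZMod (2 * k)))) ∧
    (¬(a.val < 2 * k ↔ b.val < 2 * k) →
      (UC k).neg ((a.val : ZMod (2 * k))) ((b.val : ZMod (2 * k)))) := by
  haveI : NeZero (4 * k) := ⟨by omega⟩
  haveI : Fact (1 < 4 * k) := ⟨by omega⟩
  have hb : b = 1 + a := by rw [← hab]; ring
  have hα : a.val < 4 * k := ZMod.val_lt a
  have hβ : b.val = (1 + a.val) % (4 * k) := by
    rw [hb, ZMod.val_add, ZMod.val_one]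
  obtain h | h | h | h :
      a.val + 1 < 2 * k ∨ a.val = 2 * k - 1 ∨ (2 * k ≤ a.val ∧ a.val + 1 < 4 * k)
        ∨ a.val = 4 * k - 1 := by omega
  · have hβ' : b.val = a.val + 1 := by rw [hβ, Nat.mod_eq_of_lt (by omega)]; omega
    constructor
    · intro _
      rw [hβ']
      refine ⟨?_, Or.inl ?_, ?_⟩
      · intro hc
        have := (castEq (show a.val < 2 * k by omega) (show a.val + 1 < 2 * k by omega)).mp hc
        omega
      · push_cast; ring
      · rintro (⟨hA, hB⟩ | ⟨hA, hB⟩)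
        · rw [show (0 : ZMod (2 * k)) = ((0 : ℕ) : ZMod (2 * k)) by simp] at hA
          have h1 := (castEq (by omega) (by omega)).mp hA
          have h2 := (castEq (show a.val + 1 < 2 * k by omega) (by omega)).mp hB
          omega
        · rw [show (0 : ZMod (2 * k)) = ((0 : ℕ) : ZMod (2 * k)) by simp] at hA
          have h1 := (castEq (show a.val + 1 < 2 * k by omega) (by omega)).mp hA
          omega
    · intro hne
      exact absurd (by constructor <;> intro <;> omega) hne
  · have hβ' : b.val = 2 * k := by rw [hβ, Nat.mod_eq_of_lt (by omega)]; omega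
    constructor
    · intro hiff
      exfalso
      rw [h, hβ'] at hiff
      omega
    · intro _
      rw [h, hβ', ZMod.natCast_self]
      refine ⟨?_, Or.inr ⟨rfl, rfl⟩⟩
      rw [show (0 : ZMod (2 * k)) = ((0 : ℕ) : ZMod (2 * k)) by simp]
      intro hc
      have := (castEq (show 2 * k - 1 < 2 * k by omega) (by omega)).mp hc
      omega
  · have hβ' : b.val = a.val + 1 := by rw [hβ, Nat.mod_eq_of_lt (by omega)]; omega
    have ha' : ((a.val : ℕ) : ZMod (2 * k)) = ((a.val - 2 * k : ℕ) : ZMod (2 * k)) :=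
      castRed (by omega)
    have hb' : ((b.val : ℕ) : ZMod (2 * k)) = ((a.val + 1 - 2 * k : ℕ) : ZMod (2 * k)) := by
      rw [hβ']; exact castRed (by omega)
    constructor
    · intro _
      refine ⟨?_, Or.inl ?_, ?_⟩
      · rw [ha', hb']
        intro hc
        have := (castEq (show a.val - 2 * k < 2 * k by omega)
          (show a.val + 1 - 2 * k < 2 * k by omega)).mp hc
        omega
      · rw [hβ']; push_cast; ring
      · rintro (⟨hA, hB⟩ | ⟨hA, hB⟩)
        · rw [ha', show (0 : ZMod (2 * k)) = ((0 : ℕ) : ZMod (2 * k)) by simp] at hA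
          rw [hb'] at hB
          have h1 := (castEq (show a.val - 2 * k < 2 * k by omega) (by omega)).mp hA
          have h2 := (castEq (show a.val + 1 - 2 * k < 2 * k by omega) (by omega)).mp hB
          omega
        · rw [hb', show (0 : ZMod (2 * k)) = ((0 : ℕ) : ZMod (2 * k)) by simp] at hA
          have h1 := (castEq (show a.val + 1 - 2 * k < 2 * k by omega) (by omega)).mp hA
          omega
    · intro hne
      exact absurd (by constructor <;> intro <;> omega) hne
  · have hβ' : b.val = 0 := by
      rw [hβ, h, show 1 + (4 * k - 1) = 4 * k by omega, Nat.mod_self]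
    constructor
    · intro hiff
      exfalso
      rw [h, hβ'] at hiff
      omega
    · intro _
      have ha' : ((a.val : ℕ) : ZMod (2 * k)) = ((2 * k - 1 : ℕ) : ZMod (2 * k)) := by
        rw [h, castRed (show 2 * k ≤ 4 * k - 1 by omega)]
        congr 1
        omega
      rw [ha', hβ']
      refine ⟨?_, Or.inr ⟨by simp, rfl⟩⟩
      rw [show ((0 : ℕ) : ZMod (2 * k)) = (0 : ZMod (2 * k)) by simp,
        show (0 : ZMod (2 * k)) = ((0 : ℕ) : ZMod (2 * k)) by simp]
      intro hc
      have := (castEq (show 2 * k - 1 < 2 * k by omega) (by omega)).mp hc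
      omega

lemma claim_neg (k : ℕ) (hk : 2 ≤ k) (a b : ZMod (4 * k))
    (hab : b - a = ((2 * k - 1 : ℕ) : ZMod (4 * k))) :
    ((a.val < 2 * k ↔ b.val < 2 * k) →
      (UC k).neg ((a.val : ZMod (2 * k))) ((b.val : ZMod (2 * k)))) ∧
    (¬(a.val < 2 * k ↔ b.val < 2 * k) →
      (UC k).pos ((a.val : ZMod (2 * k))) ((b.val : ZMod (2 * k)))) := by
  haveI : NeZero (4 * k) := ⟨by omega⟩
  have hb : b = ((2 * k - 1 : ℕ) : ZMod (4 * k)) + a := by rw [← hab]; ring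
  have hα : a.val < 4 * k := ZMod.val_lt a
  have hβ : b.val = ((2 * k - 1) + a.val) % (4 * k) := by
    rw [hb, ZMod.val_add, ZMod.val_cast_of_lt (show 2 * k - 1 < 4 * k by omega)]
  obtain h | h | h | h :
      a.val = 0 ∨ (1 ≤ a.val ∧ a.val ≤ 2 * k - 1) ∨ a.val = 2 * k
        ∨ (2 * k + 1 ≤ a.val ∧ a.val < 4 * k) := by omega
  · have hβ' : b.val = 2 * k - 1 := by rw [hβ, Nat.mod_eq_of_lt (by omega)]; omega
    constructor
    · intro _
      rw [h, hβ']
      refine ⟨?_, Or.inl ⟨by simp, rfl⟩⟩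
      intro hc
      have := (castEq (show 0 < 2 * k by omega) (show 2 * k - 1 < 2 * k by omega)).mp hc
      omega
    · intro hne
      exfalso
      apply hne
      rw [h, hβ']
      constructor <;> intro <;> omega
  · have hβ' : b.val = a.val + 2 * k - 1 := by rw [hβ, Nat.mod_eq_of_lt (by omega)]; omega
    have hb' : ((b.val : ℕ) : ZMod (2 * k)) = ((a.val - 1 : ℕ) : ZMod (2 * k)) := by
      rw [hβ', castRed (show 2 * k ≤ a.val + 2 * k - 1 by omega)]
      congr 1
      omega
    constructor
    · intro hiff
      exfalso
      rw [hβ'] at hiff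
      omega
    · intro _
      refine ⟨?_, Or.inr ?_, ?_⟩
      · rw [hb']
        intro hc
        have := (castEq (show a.val < 2 * k by omega)
          (show a.val - 1 < 2 * k by omega)).mp hc
        omega
      · rw [hb', Nat.cast_sub (show 1 ≤ a.val by omega)]
        push_cast
        ring
      · rintro (⟨hA, hB⟩ | ⟨hA, hB⟩)
        · rw [show (0 : ZMod (2 * k)) = ((0 : ℕ) : ZMod (2 * k)) by simp] at hA
          have h1 := (castEq (show a.val < 2 * k by omega) (by omega)).mp hA
          omega
        · rw [hb', show (0 : ZMod (2 * k)) = ((0 : ℕ) : ZMod (2 * k)) by simp] at hA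
          have h1 := (castEq (show a.val - 1 < 2 * k by omega) (by omega)).mp hA
          have h2 := (castEq (show a.val < 2 * k by omega)
            (show 2 * k - 1 < 2 * k by omega)).mp hB
          omega
  · have hβ' : b.val = 4 * k - 1 := by rw [hβ, Nat.mod_eq_of_lt (by omega)]; omega
    have hb' : ((b.val : ℕ) : ZMod (2 * k)) = ((2 * k - 1 : ℕ) : ZMod (2 * k)) := by
      rw [hβ', castRed (show 2 * k ≤ 4 * k - 1 by omega)]
      congr 1
      omega
    constructor
    · intro _
      rw [h, ZMod.natCast_self, hb']
      refine ⟨?_, Or.inl ⟨rfl, rfl⟩⟩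
      rw [show (0 : ZMod (2 * k)) = ((0 : ℕ) : ZMod (2 * k)) by simp]
      intro hc
      have := (castEq (by omega) (show 2 * k - 1 < 2 * k by omega)).mp hc
      omega
    · intro hne
      exfalso
      apply hne
      rw [h, hβ']
      constructor <;> intro <;> omega
  · have hβ' : b.val = a.val - 2 * k - 1 := by
      rw [hβ, Nat.mod_eq_sub_mod (by omega), Nat.mod_eq_of_lt (by omega)]
      omega
    have ha' : ((a.val : ℕ) : ZMod (2 * k)) = ((a.val - 2 * k : ℕ) : ZMod (2 * k)) :=
      castRed (by omega)
    constructor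
    · intro hiff
      exfalso
      rw [hβ'] at hiff
      omega
    · intro _
      refine ⟨?_, Or.inr ?_, ?_⟩
      · rw [ha', hβ']
        intro hc
        have := (castEq (show a.val - 2 * k < 2 * k by omega)
          (show a.val - 2 * k - 1 < 2 * k by omega)).mp hc
        omega
      · rw [ha', hβ', show a.val - 2 * k - 1 = (a.val - 2 * k) - 1 by omega,
          Nat.cast_sub (show 1 ≤ a.val - 2 * k by omega)]
        push_cast
        ring
      · rintro (⟨hA, hB⟩ | ⟨hA, hB⟩)
        · rw [ha', show (0 : ZMod (2 * k)) = ((0 : ℕ) : ZMod (2 * k)) by simp] at hA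
          have h1 := (castEq (show a.val - 2 * k < 2 * k by omega) (by omega)).mp hA
          omega
        · rw [hβ', show (0 : ZMod (2 * k)) = ((0 : ℕ) : ZMod (2 * k)) by simp] at hA
          rw [ha'] at hB
          have h1 := (castEq (show a.val - 2 * k - 1 < 2 * k by omega) (by omega)).mp hA
          have h2 := (castEq (show a.val - 2 * k < 2 * k by omega)
            (show 2 * k - 1 < 2 * k by omega)).mp hB
          omega

lemma hom_to_shom {V : Type*} (k : ℕ) (hk : 2 ≤ k) (G : SignedGraph V)
    (f : V → ZMod (4 * k)) (hf : G.IsHom (rhoUC k) f) : G.SHom (UC k) := by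
  refine ⟨fun v => decide ((f v).val < 2 * k), fun v => (((f v).val : ℕ) : ZMod (2 * k)),
    ?_, ?_⟩
  · intro u v h
    rcases h with ⟨heq, hpos⟩ | ⟨hne, hneg⟩
    · have hiff : ((f u).val < 2 * k ↔ (f v).val < 2 * k) := decide_eq_decide.mp heq
      obtain ⟨-, hd | hd⟩ := hf.1 u v hpos
      · exact (claim_pos k hk _ _ hd).1 hiff
      · exact (UC k).pos_symm _ _ ((claim_pos k hk _ _ hd).1 hiff.symm)
    · have hiff : ¬((f u).val < 2 * k ↔ (f v).val < 2 * k) :=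
        fun h => hne (decide_eq_decide.mpr h)
      obtain ⟨-, hd | hd⟩ := hf.2 u v hneg
      · exact (claim_neg k hk _ _ hd).2 hiff
      · exact (UC k).pos_symm _ _ ((claim_neg k hk _ _ hd).2 fun h => hiff h.symm)
  · intro u v h
    rcases h with ⟨heq, hneg⟩ | ⟨hne, hpos⟩
    · have hiff : ((f u).val < 2 * k ↔ (f v).val < 2 * k) := decide_eq_decide.mp heq
      obtain ⟨-, hd | hd⟩ := hf.2 u v hneg
      · exact (claim_neg k hk _ _ hd).1 hiff
      · exact (UC k).neg_symm _ _ ((claim_neg k hk _ _ hd).1 hiff.symm)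
    · have hiff : ¬((f u).val < 2 * k ↔ (f v).val < 2 * k) :=
        fun h => hne (decide_eq_decide.mpr h)
      obtain ⟨-, hd | hd⟩ := hf.1 u v hpos
      · exact (claim_pos k hk _ _ hd).2 hiff
      · exact (UC k).neg_symm _ _ ((claim_pos k hk _ _ hd).2 fun h => hiff h.symm)

lemma neg_hom {V : Type*} (k : ℕ) (G : SignedGraph V) (f : V → ZMod (4 * k))
    (hf : G.IsHom (rhoUC k) f) : G.IsHom (rhoUC k) (fun v => -(f v)) := by
  constructor
  · intro u v h
    obtain ⟨h1, h2⟩ := hf.1 u v h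
    refine ⟨fun hc => h1 (neg_injective hc), ?_⟩
    rcases h2 with h3 | h3
    · right; rw [← h3]; ring
    · left; rw [← h3]; ring
  · intro u v h
    obtain ⟨h1, h2⟩ := hf.2 u v h
    refine ⟨fun hc => h1 (neg_injective hc), ?_⟩
    rcases h2 with h3 | h3
    · right; rw [← h3]; ring
    · left; rw [← h3]; ring

end Aux

/-- Let `k ≥ 2` and let `G` be a bipartite planar signed graph of girth at least `g` which
admits no s-homomorphism to `UC_{2k}` but is minimal with this property (every proper
subgraph admits one).  Then for every positive edge `xy` of `G`, the smallest odd `i` such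
that `G − xy` has a sign-preserving homomorphism to `ρ(UC_{2k})` mapping `x ↦ u_0` and
`y ↦ u_i` satisfies `3 ≤ i ≤ 2k - 1`. -/

theorem stmt17 {V : Type*} (k g : ℕ) (hk : 2 ≤ k) (G : SignedGraph V)
    (hbip : G.underlying.Colorable 2)
    (hplanar : IsPlanar G.underlying)
    (hgirth : ∀ (v : V) (w : G.underlying.Walk v v), w.IsCycle → g ≤ w.length)
    (hno : ¬ G.SHom (UC k))
    (hmin : ∀ G' : SignedGraph V,
      (∀ u v, G'.pos u v → G.pos u v) → (∀ u v, G'.neg u v → G.neg u v) →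
      ¬(∀ u v, (G'.pos u v ↔ G.pos u v) ∧ (G'.neg u v ↔ G.neg u v)) →
      G'.SHom (UC k)) :
    ∀ x y : V, G.pos x y → ∀ i : ℕ,
      IsLeast {m : ℕ | Odd m ∧ ∃ f : V → ZMod (4 * k),
        (deleteEdge G x y).IsHom (rhoUC k) f ∧ f x = 0 ∧ f y = (m : ZMod (4 * k))} i →
      3 ≤ i ∧ i ≤ 2 * k - 1 := by
  intro x y hxy i hi
  haveI : NeZero (4 * k) := ⟨by omega⟩
  haveI : Fact (1 < 4 * k) := ⟨by omega⟩
  obtain ⟨⟨hodd, f, hf, hfx, hfy⟩, hlb⟩ := hi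
  have hi4k : i < 4 * k := by
    by_contra hge
    push_neg at hge
    obtain ⟨m, hm⟩ := hodd
    have hodd' : Odd (i - 4 * k) := ⟨m - 2 * k, by omega⟩
    have hmem : (i - 4 * k) ∈ {m : ℕ | Odd m ∧ ∃ f : V → ZMod (4 * k),
        (deleteEdge G x y).IsHom (rhoUC k) f ∧ f x = 0 ∧ f y = (m : ZMod (4 * k))} :=
      ⟨hodd', f, hf, hfx, by rw [hfy]; exact castRed hge⟩
    have := hlb hmem
    omega
  have hne1 : i ≠ 1 := by
    intro h1
    apply hno
    apply hom_to_shom k hk G f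
    constructor
    · intro u v hp
      by_cases hc : (u = x ∧ v = y) ∨ (u = y ∧ v = x)
      · rcases hc with ⟨rfl, rfl⟩ | ⟨rfl, rfl⟩
        · rw [hfx, hfy, h1]
          refine ⟨?_, Or.inl ?_⟩
          · simp only [Nat.cast_one]
            exact zero_ne_one
          · simp
        · rw [hfx, hfy, h1]
          refine ⟨?_, Or.inr ?_⟩
          · simp only [Nat.cast_one]
            exact one_ne_zero
          · simp
      · exact hf.1 u v ⟨hp, hc⟩
    · exact hf.2
  have hub : i ≤ 2 * k - 1 := by
    by_contra hgt
    push_neg at hgt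
    obtain ⟨m, hm⟩ := hodd
    have hgt' : 2 * k + 1 ≤ i := by omega
    have hodd' : Odd (4 * k - i) := ⟨2 * k - m - 1, by omega⟩
    have hcast : -(f y) = ((4 * k - i : ℕ) : ZMod (4 * k)) := by
      rw [hfy]
      have hz : ((4 * k - i : ℕ) : ZMod (4 * k)) + ((i : ℕ) : ZMod (4 * k)) = 0 := by
        rw [← Nat.cast_add, show 4 * k - i + i = 4 * k by omega, ZMod.natCast_self]
      exact neg_eq_of_add_eq_zero_left hz
    have hmem : (4 * k - i) ∈ {m : ℕ | Odd m ∧ ∃ f : V → ZMod (4 * k),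
        (deleteEdge G x y).IsHom (rhoUC k) f ∧ f x = 0 ∧ f y = (m : ZMod (4 * k))} :=
      ⟨hodd', fun v => -(f v), neg_hom k _ f hf, by simp [hfx], hcast⟩
    have := hlb hmem
    omega
  obtain ⟨m, hm⟩ := hodd
  exact ⟨by omega, hub⟩
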